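/- arXiv:1709.05153 — 4 statements merged into one kernel-verified Lean document; each statement's English description precedes it below -/
import Mathlib

section
/- Let μ be a finite measure on a measurable space M, let κ be a Markov kernel on M, and let ψ_1,…,ψ_N : M → ℝ be bounded measurable functions whose mass matrix M̄ is invertible. Write Kψ_i(x) = ∫ ψ_i(y) dκ(x)(y), define the N×N matrix T̄ by T̄_{ij} = ∫ (Kψ_i) ψ_j dμ, and set K̄ = T̄ M̄⁻¹. Then for every c ∈ ℝ^N and every d ∈ ℝ^N, ∫ (Σ_j (K̄ᵀ c)_j ψ_j − Σ_i c_i Kψ_i)² dμ ≤ ∫ (Σ_j d_j ψ_j − Σ_i c_i Kψ_i)² dμ; that is, the L²(μ)-projection of the function Σ_i c_i Kψ_i onto the span of ψ_1,…,ψ_N is the function Σ_j (K̄ᵀ c)_j ψ_j. -/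
/-!
The residual `r = Σ_j (K̄ᵀ c)_j ψ_j - Σ_i c_i Kψ_i` is `L²(μ)`-orthogonal to every `ψ_j`: its inner
product with `ψ_j` is `((K̄ᵀ c)ᵀ M̄ - cᵀ T̄)_j`, which vanishes because `K̄ M̄ = T̄`. For any other
`d`, the difference of the two candidates lies in the span of the `ψ_j`, so by Pythagoras its
squared norm only adds to `∫ r²`. Boundedness of the `ψ_i`, inherited by the `Kψ_i` since `κ` is
Markov, makes everything square-integrable for the finite measure `μ`.
-/

open MeasureTheory Matrix ProbabilityTheory
open scoped ENNReal

section L2Projection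

variable {α : Type*} [MeasurableSpace α] {μ : Measure α}

lemma integral_sum_mul_mul {ι : Type*} [Fintype ι] (v : ι → ℝ) {φ : ι → α → ℝ} {g : α → ℝ}
    (h : ∀ i, Integrable (fun x => φ i x * g x) μ) :
    ∫ x, (∑ i, v i * φ i x) * g x ∂μ = ∑ i, v i * ∫ x, φ i x * g x ∂μ := by
  simp_rw [Finset.sum_mul, mul_assoc]
  rw [integral_finsetSum _ fun i _ => (h i).const_mul (v i)]
  simp_rw [integral_const_mul]

lemma integral_sq_le_integral_add_sq_of_integral_mul_eq_zero {r e : α → ℝ}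
    (hr : MemLp r 2 μ) (he : MemLp e 2 μ) (horth : ∫ x, e x * r x ∂μ = 0) :
    ∫ x, r x ^ 2 ∂μ ≤ ∫ x, (e x + r x) ^ 2 ∂μ := by
  have hr2 : Integrable (fun x => r x ^ 2) μ := hr.integrable_sq
  have he2 : Integrable (fun x => e x ^ 2) μ := he.integrable_sq
  have her : Integrable (fun x => 2 * (e x * r x)) μ := (he.integrable_mul hr).const_mul 2
  calc ∫ x, r x ^ 2 ∂μ
      ≤ ∫ x, r x ^ 2 ∂μ + ∫ x, e x ^ 2 ∂μ :=
        le_add_of_nonneg_right (integral_nonneg fun _ => sq_nonneg _)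
    _ = ∫ x, r x ^ 2 + e x ^ 2 + 2 * (e x * r x) ∂μ := by
      rw [integral_add (f := fun x => r x ^ 2 + e x ^ 2) (hr2.add he2) her,
        integral_add hr2 he2, integral_const_mul, horth, mul_zero, add_zero]
    _ = ∫ x, (e x + r x) ^ 2 ∂μ := integral_congr_ae (ae_of_all _ fun x => by ring)

lemma integral_sq_sub_le_of_vecMul_gram_eq {ι : Type*} [Fintype ι] {φ : ι → α → ℝ}
    {f : α → ℝ} (hφ : ∀ i, MemLp (φ i) 2 μ) (hf : MemLp f 2 μ) (G : Matrix ι ι ℝ)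
    (hG : ∀ i j, G i j = ∫ x, φ i x * φ j x ∂μ) {a : ι → ℝ}
    (ha : ∀ j, (a ᵥ* G) j = ∫ x, f x * φ j x ∂μ) (d : ι → ℝ) :
    ∫ x, (∑ j, a j * φ j x - f x) ^ 2 ∂μ ≤ ∫ x, (∑ j, d j * φ j x - f x) ^ 2 ∂μ := by
  have hspan (v : ι → ℝ) : MemLp (fun x => ∑ j, v j * φ j x) 2 μ :=
    memLp_finsetSum _ fun j _ => (hφ j).const_mul (v j)
  have hr : MemLp (fun x => ∑ j, a j * φ j x - f x) 2 μ := (hspan a).sub hf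
  have horth (j : ι) : ∫ x, φ j x * (∑ k, a k * φ k x - f x) ∂μ = 0 := by
    simp_rw [mul_comm (φ j _), sub_mul]
    have hint (g : α → ℝ) (hg : MemLp g 2 μ) : Integrable (fun x => g x * φ j x) μ :=
      hg.integrable_mul (hφ j)
    rw [integral_sub (hint _ (hspan a)) (hint f hf),
      integral_sum_mul_mul a fun k => hint _ (hφ k), ← ha j]
    simp [vecMul, dotProduct, hG]
  have hcross : ∫ x, (∑ j, (d - a) j * φ j x) * (∑ k, a k * φ k x - f x) ∂μ = 0 := by
    rw [integral_sum_mul_mul _ fun j => (hφ j).integrable_mul hr]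
    simp [horth]
  convert integral_sq_le_integral_add_sq_of_integral_mul_eq_zero hr (hspan (d - a)) hcross
    using 3 with x
  simp only [Pi.sub_apply, sub_mul, Finset.sum_sub_distrib]
  ring

end L2Projection

lemma memLp_integral_kernel {α β : Type*} [MeasurableSpace α] [MeasurableSpace β]
    (μ : Measure α) [IsFiniteMeasure μ] (κ : Kernel α β) [IsMarkovKernel κ] {f : β → ℝ}
    (hf : Measurable f) {C : ℝ} (hC : ∀ y, |f y| ≤ C) (p : ℝ≥0∞) :
    MemLp (fun x => ∫ y, f y ∂κ x) p μ := by
  refine MemLp.of_bound hf.stronglyMeasurable.integral_kernel.aestronglyMeasurable C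
    (ae_of_all _ fun x => ?_)
  simpa using norm_integral_le_of_norm_le_const (μ := κ x)
    (ae_of_all _ fun y => (Real.norm_eq_abs (f y)).trans_le (hC y))

/-- Theorem 2.4 of the paper. For a Markov kernel `κ` and bounded
measurable basis functions `ψ_1,…,ψ_N` with invertible mass matrix `M̄`, the matrix
`K̄ = T̄ M̄⁻¹` represents the `L²(μ)`-projection of the Koopman operator onto the span of
the basis functions: `Σ_j (K̄ᵀ c)_j ψ_j` is the best `L²(μ)` approximation of
`Σ_i c_i Kψ_i`. -/
theorem stmt_1 {M : Type*} [MeasurableSpace M] (μ : Measure M) [IsFiniteMeasure μ]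
    (κ : Kernel M M) [IsMarkovKernel κ] (N : ℕ)
    (ψ : Fin N → M → ℝ)
    (hψ_meas : ∀ i, Measurable (ψ i))
    (hψ_bdd : ∀ i, ∃ C : ℝ, ∀ x, |ψ i x| ≤ C)
    (Kψ : Fin N → M → ℝ)
    (hKψ : ∀ i x, Kψ i x = ∫ y, ψ i y ∂(κ x))
    (Mbar Tbar Kbar : Matrix (Fin N) (Fin N) ℝ)
    (hMbar : ∀ i j, Mbar i j = ∫ x, ψ i x * ψ j x ∂μ)
    (hMbar_inv : IsUnit Mbar)
    (hTbar : ∀ i j, Tbar i j = ∫ x, Kψ i x * ψ j x ∂μ)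
    (hKbar : Kbar = Tbar * Mbar⁻¹) :
    ∀ c d : Fin N → ℝ,
      (∫ x, (∑ j, (Kbarᵀ *ᵥ c) j * ψ j x - ∑ i, c i * Kψ i x) ^ 2 ∂μ)
        ≤ ∫ x, (∑ j, d j * ψ j x - ∑ i, c i * Kψ i x) ^ 2 ∂μ := by
  intro c d
  have hψ (i) : MemLp (ψ i) 2 μ := by
    obtain ⟨C, hC⟩ := hψ_bdd i
    exact MemLp.of_bound (hψ_meas i).aestronglyMeasurable C (ae_of_all _ hC)
  have hKψ_mem (i) : MemLp (Kψ i) 2 μ := by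
    obtain ⟨C, hC⟩ := hψ_bdd i
    rw [funext (hKψ i)]
    exact memLp_integral_kernel μ κ (hψ_meas i) hC 2
  have hnormal : (Kbarᵀ *ᵥ c) ᵥ* Mbar = c ᵥ* Tbar := by
    rw [mulVec_transpose, vecMul_vecMul, hKbar,
      nonsing_inv_mul_cancel_right _ _ ((isUnit_iff_isUnit_det Mbar).mp hMbar_inv)]
  refine integral_sq_sub_le_of_vecMul_gram_eq hψ
    (memLp_finsetSum _ fun i _ => (hKψ_mem i).const_mul (c i)) Mbar hMbar (fun j => ?_) d
  rw [hnormal, integral_sum_mul_mul c fun i => (hKψ_mem i).integrable_mul (hψ j)]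
  simp [vecMul, dotProduct, hTbar]
end

section
/- Let M be a measurable space, F : M → M a map, x_1,…,x_T points of M, and ψ_1,…,ψ_N : M → ℝ functions such that each ψ_i and each ψ_i ∘ F is measurable. Let Ψ_X and Ψ_Y be the N×T matrices with entries (Ψ_X)_{ij} = ψ_i(x_j) and (Ψ_Y)_{ij} = ψ_i(F(x_j)), and assume Ψ_X Ψ_Xᵀ is invertible. Let μ_T be the empirical measure of x_1,…,x_T, let M̄ be the mass matrix of ψ_1,…,ψ_N with respect to μ_T, and define T̄ by T̄_{ij} = ∫ ψ_i(F(x)) ψ_j(x) dμ_T(x). Then T̄ M̄⁻¹ = Ψ_Y Ψ_Xᵀ (Ψ_X Ψ_Xᵀ)⁻¹. -/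
open MeasureTheory Matrix ENNReal

/-!
Integrating against the empirical measure is averaging over the sample, so
`M̄ = T⁻¹ • Ψ_X Ψ_Xᵀ` and `T̄ = T⁻¹ • Ψ_Y Ψ_Xᵀ`; the common factor `T⁻¹` cancels in `T̄ M̄⁻¹`.
-/

namespace Matrix

variable {n K : Type*} [Fintype n] [DecidableEq n] [Field K]

/-- If `A` is singular then so is `r • A`, and both inverses are the junk value `0`. -/
theorem inv_smul_of_ne_zero (A : Matrix n n K) {r : K} (hr : r ≠ 0) :
    (r • A)⁻¹ = r⁻¹ • A⁻¹ := by
  by_cases hA : IsUnit A.det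
  · exact inv_smul' A (Units.mk0 r hr) hA
  · have hrA : ¬IsUnit (r • A).det := by
      simpa [det_smul, isUnit_iff_ne_zero, hr] using hA
    rw [nonsing_inv_apply_not_isUnit A hA, nonsing_inv_apply_not_isUnit _ hrA, smul_zero]

theorem smul_mul_inv_smul {m : Type*} (A : Matrix m n K) (B : Matrix n n K) {r : K}
    (hr : r ≠ 0) : (r • A) * (r • B)⁻¹ = A * B⁻¹ := by
  rw [inv_smul_of_ne_zero B hr, Matrix.smul_mul, Matrix.mul_smul, smul_smul,
    mul_inv_cancel₀ hr, one_smul]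

end Matrix

section Empirical

variable {M ι : Type*} [MeasurableSpace M] [Fintype ι]

theorem integral_smul_sum_dirac {E : Type*} [NormedAddCommGroup E] [NormedSpace ℝ E]
    [CompleteSpace E] (c : ℝ≥0∞) (x : ι → M) {f : M → E} (hf : StronglyMeasurable f) :
    ∫ y, f y ∂(c • ∑ j, Measure.dirac (x j)) = c.toReal • ∑ j, f (x j) := by
  have hint : ∀ j, Integrable f (Measure.dirac (x j)) := fun j =>
    integrable_dirac' hf enorm_lt_top
  rw [integral_smul_measure, integral_finsetSum_measure (fun j _ => hint j)]
  simp only [integral_dirac' f _ hf]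

theorem integral_mul_smul_sum_dirac {κ : Type*} (c : ℝ≥0∞) (x : ι → M)
    {f g : κ → M → ℝ} (hf : ∀ i, Measurable (f i)) (hg : ∀ i, Measurable (g i))
    (A B : Matrix κ ι ℝ) (hA : ∀ i k, A i k = f i (x k)) (hB : ∀ i k, B i k = g i (x k))
    (i j : κ) :
    ∫ y, f i y * g j y ∂(c • ∑ k, Measure.dirac (x k)) = c.toReal * (A * Bᵀ) i j := by
  rw [integral_smul_sum_dirac (f := fun y => f i y * g j y) c x
    ((hf i).mul (hg j)).stronglyMeasurable]
  simp only [mul_apply, transpose_apply, hA, hB, smul_eq_mul]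

end Empirical

theorem stmt_3_general {M : Type*} [MeasurableSpace M] (F : M → M) (T : ℕ) (hT : 0 < T)
    (x : Fin T → M) (N : ℕ) (ψ : Fin N → M → ℝ)
    (hψ_meas : ∀ i, Measurable (ψ i))
    (hψF_meas : ∀ i, Measurable (ψ i ∘ F))
    (ΨX ΨY : Matrix (Fin N) (Fin T) ℝ)
    (hΨX : ∀ i j, ΨX i j = ψ i (x j))
    (hΨY : ∀ i j, ΨY i j = ψ i (F (x j)))
    (μT : Measure M)
    (hμT : μT = (T : ℝ≥0∞)⁻¹ • ∑ j : Fin T, Measure.dirac (x j))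
    (Mbar Tbar : Matrix (Fin N) (Fin N) ℝ)
    (hMbar : ∀ i j, Mbar i j = ∫ y, ψ i y * ψ j y ∂μT)
    (hTbar : ∀ i j, Tbar i j = ∫ y, ψ i (F y) * ψ j y ∂μT) :
    Tbar * Mbar⁻¹ = ΨY * ΨXᵀ * (ΨX * ΨXᵀ)⁻¹ := by
  subst hμT
  set r := ((T : ℝ≥0∞)⁻¹).toReal
  have hr : r ≠ 0 := by
    simpa [r, toReal_inv] using hT.ne'
  have hM : Mbar = r • (ΨX * ΨXᵀ) := by
    ext i j
    rw [hMbar, Matrix.smul_apply, smul_eq_mul]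
    exact integral_mul_smul_sum_dirac _ x hψ_meas hψ_meas ΨX ΨX hΨX hΨX i j
  have hTb : Tbar = r • (ΨY * ΨXᵀ) := by
    ext i j
    rw [hTbar, Matrix.smul_apply, smul_eq_mul]
    exact integral_mul_smul_sum_dirac _ x hψF_meas hψ_meas ΨY ΨX hΨY hΨX i j
  rw [hM, hTb, smul_mul_inv_smul _ _ hr]

/-- Proposition 2.6 of the paper. For a deterministic system `x ↦ F x`,
the matrix representation `T̄ M̄⁻¹` of the projected Koopman operator with respect to the
empirical measure equals the EDMD matrix `Ψ_Y Ψ_Xᵀ (Ψ_X Ψ_Xᵀ)⁻¹`. -/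
theorem stmt_3 {M : Type*} [MeasurableSpace M] (F : M → M) (T : ℕ) (hT : 0 < T)
    (x : Fin T → M) (N : ℕ) (ψ : Fin N → M → ℝ)
    (hψ_meas : ∀ i, Measurable (ψ i))
    (hψF_meas : ∀ i, Measurable (ψ i ∘ F))
    (ΨX ΨY : Matrix (Fin N) (Fin T) ℝ)
    (hΨX : ∀ i j, ΨX i j = ψ i (x j))
    (hΨY : ∀ i j, ΨY i j = ψ i (F (x j)))
    (hinv : IsUnit (ΨX * ΨXᵀ))
    (μT : Measure M)
    (hμT : μT = (T : ℝ≥0∞)⁻¹ • ∑ j : Fin T, Measure.dirac (x j))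
    (Mbar Tbar : Matrix (Fin N) (Fin N) ℝ)
    (hMbar : ∀ i j, Mbar i j = ∫ y, ψ i y * ψ j y ∂μT)
    (hTbar : ∀ i j, Tbar i j = ∫ y, ψ i (F y) * ψ j y ∂μT) :
    Tbar * Mbar⁻¹ = ΨY * ΨXᵀ * (ΨX * ΨXᵀ)⁻¹ :=
  stmt_3_general F T hT x N ψ hψ_meas hψF_meas ΨX ΨY hΨX hΨY μT hμT Mbar Tbar hMbar hTbar
end

section
/- Let M be a measurable space, κ a Markov kernel on M, and ψ_1,…,ψ_N : M → ℝ bounded measurable functions; write Kψ_i(x) = ∫ ψ_i(y) dκ(x)(y) and K(ψ_i²)(x) = ∫ ψ_i(y)² dκ(x)(y). On a probability space let (X_k, Y_k), k = 1,…,T, be mutually independent M×M-valued random pairs such that each pair (X_k, Y_k) has transition kernel κ, and let ν_k denote the law of X_k. Assume there exists γ̃ ≥ 0 such that ∫ ψ_j(x)² (K(ψ_i²)(x) − (Kψ_i(x))²) dν_k(x) ≤ γ̃ for all indices i, j and all k. Define the random N×N matrices K̂_T with entries (1/T) Σ_{k=1}^T ψ_i(Y_k) ψ_j(X_k) and K_T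 with entries (1/T) Σ_{k=1}^T (Kψ_i)(X_k) ψ_j(X_k). Then E[‖K_T − K̂_T‖_F²] ≤ N² γ̃ / T. -/
/-!
Entry `(i, j)` of `K_T - K̂_T` is `T⁻¹ ∑ₖ r(Xₖ, Yₖ)` with `r(x, y) = (Kψᵢ(x) - ψᵢ(y)) ψⱼ(x)`.
Since `Yₖ` is drawn from `κ(Xₖ)`, each summand has mean zero and second moment
`∫ ψⱼ² (K(ψᵢ²) - (Kψᵢ)²) dνₖ ≤ γ̃` (a conditional variance). The summands are independent,
so the cross terms vanish and `E[(∑ₖ r(Xₖ, Yₖ))²] ≤ T γ̃`; summing over the `N²` entries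
gives `N² γ̃ / T`.
-/

open MeasureTheory ProbabilityTheory Matrix

noncomputable def frobeniusNormSq {m n : Type*} [Fintype m] [Fintype n]
    (A : Matrix m n ℝ) : ℝ :=
  ∑ i, ∑ j, (A i j) ^ 2

lemma integral_frobeniusNormSq_le {Ω m n : Type*} [MeasurableSpace Ω] {P : Measure Ω}
    [Fintype m] [Fintype n] {A : Ω → Matrix m n ℝ} {B : ℝ}
    (hA_int : ∀ i j, Integrable (fun ω => A ω i j ^ 2) P)
    (hA : ∀ i j, ∫ ω, A ω i j ^ 2 ∂P ≤ B) :
    ∫ ω, frobeniusNormSq (A ω) ∂P ≤ Fintype.card m * Fintype.card n * B := by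
  calc ∫ ω, frobeniusNormSq (A ω) ∂P = ∑ i, ∑ j, ∫ ω, A ω i j ^ 2 ∂P := by
        simp only [frobeniusNormSq]
        rw [integral_finsetSum _ fun i _ =>
          integrable_finsetSum _ fun j _ => hA_int i j]
        simp_rw [integral_finsetSum _ fun j _ => hA_int _ j]
    _ ≤ ∑ _i : m, ∑ _j : n, B := by gcongr with i _ j _; exact hA i j
    _ = Fintype.card m * Fintype.card n * B := by simp [mul_assoc]

section BoundedFunctions

variable {α : Type*} [MeasurableSpace α]

lemma memLp_of_abs_le (μ : Measure α) [IsFiniteMeasure μ] {f : α → ℝ} (hf : Measurable f)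
    {C : ℝ} (hC : ∀ x, |f x| ≤ C) (p : ENNReal) : MemLp f p μ :=
  (memLp_top_of_bound hf.aestronglyMeasurable C (.of_forall hC)).mono_exponent le_top

lemma abs_integral_le_of_abs_le (μ : Measure α) [IsProbabilityMeasure μ] {f : α → ℝ} {C : ℝ}
    (hC : ∀ x, |f x| ≤ C) : |∫ x, f x ∂μ| ≤ C := by
  simpa using norm_integral_le_of_norm_le_const (μ := μ) (f := f) (.of_forall hC)

end BoundedFunctions

lemma integrable_sq_sum_comp_of_abs_le {Ω α ι : Type*} [MeasurableSpace Ω]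
    [MeasurableSpace α] {P : Measure Ω} [IsFiniteMeasure P] [Fintype ι] {W : ι → Ω → α}
    (hW : ∀ k, Measurable (W k)) {r : α → ℝ} (hr : Measurable r) {C : ℝ}
    (hC : ∀ p, |r p| ≤ C) : Integrable (fun ω => (∑ k, r (W k ω)) ^ 2) P :=
  (memLp_finsetSum _ fun k _ => memLp_of_abs_le P (hr.comp (hW k)) (fun _ => hC _) 2).integrable_sq

section CenteredMoments

variable {α : Type*} [MeasurableSpace α] {μ : Measure α} [IsProbabilityMeasure μ] {f : α → ℝ}

lemma integral_integral_sub_mul_const (hf : Integrable f μ) (c : ℝ) :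
    ∫ y, (∫ z, f z ∂μ - f y) * c ∂μ = 0 := by
  rw [integral_mul_const, integral_sub (integrable_const _) hf]
  simp

lemma integral_integral_sub_mul_const_sq (hf : MemLp f 2 μ) (c : ℝ) :
    ∫ y, ((∫ z, f z ∂μ - f y) * c) ^ 2 ∂μ
      = c ^ 2 * (∫ y, f y ^ 2 ∂μ - (∫ y, f y ∂μ) ^ 2) := by
  have hvar := variance_eq_integral (μ := μ) hf.aemeasurable
  rw [variance_eq_sub hf] at hvar
  simp only [Pi.pow_apply] at hvar
  rw [hvar, ← integral_const_mul]
  congr 1 with y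
  ring

end CenteredMoments

lemma integral_sq_sum_of_iIndepFun {Ω ι : Type*} [MeasurableSpace Ω] {P : Measure Ω}
    [IsFiniteMeasure P] [Fintype ι] {Z : ι → Ω → ℝ} (hindep : iIndepFun Z P)
    (hZ : ∀ k, MemLp (Z k) 2 P) (hmean : ∀ k, ∫ ω, Z k ω ∂P = 0) :
    ∫ ω, (∑ k, Z k ω) ^ 2 ∂P = ∑ k, ∫ ω, Z k ω ^ 2 ∂P := by
  have hsum_mean : ∫ ω, (∑ k, Z k) ω ∂P = 0 := by
    simp only [Finset.sum_apply]
    rw [integral_finsetSum _ fun k _ => (hZ k).integrable one_le_two]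
    simp [hmean]
  have hvar := IndepFun.variance_sum (s := Finset.univ) (fun k _ => hZ k)
    fun k _ l _ hkl => hindep.indepFun hkl
  rw [variance_of_integral_eq_zero (memLp_finsetSum' _ fun k _ => hZ k).aemeasurable hsum_mean]
    at hvar
  simpa [variance_of_integral_eq_zero (hZ _).aemeasurable (hmean _)] using hvar

section KernelLaw

variable {Ω α β : Type*} [MeasurableSpace Ω] [MeasurableSpace α] [MeasurableSpace β]
  {P : Measure Ω} {κ : Kernel α β}

lemma integral_comp_of_map_eq_compProd [IsFiniteMeasure P] [IsSFiniteKernel κ]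
    {X : Ω → α} {Y : Ω → β} (hXY : AEMeasurable (fun ω => (X ω, Y ω)) P)
    (hlaw : P.map (fun ω => (X ω, Y ω)) = P.map X ⊗ₘ κ) {f : α × β → ℝ}
    (hf : Integrable f (P.map X ⊗ₘ κ)) :
    ∫ ω, f (X ω, Y ω) ∂P = ∫ x, ∫ y, f (x, y) ∂κ x ∂P.map X := by
  rw [← Measure.integral_compProd hf, ← hlaw,
    integral_map hXY (hlaw ▸ hf.aestronglyMeasurable)]

theorem integral_sq_sum_comp_eq_sum_integral_integral_sq [IsFiniteMeasure P]
    [IsFiniteKernel κ] {ι : Type*} [Fintype ι] {X : ι → Ω → α} {Y : ι → Ω → β}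
    (hX : ∀ k, Measurable (X k)) (hY : ∀ k, Measurable (Y k))
    (hindep : iIndepFun (fun k ω => (X k ω, Y k ω)) P)
    (hlaw : ∀ k, P.map (fun ω => (X k ω, Y k ω)) = P.map (X k) ⊗ₘ κ)
    {r : α × β → ℝ} (hr : Measurable r) {C : ℝ} (hC : ∀ p, |r p| ≤ C)
    (hr_mean : ∀ x, ∫ y, r (x, y) ∂κ x = 0) :
    ∫ ω, (∑ k, r (X k ω, Y k ω)) ^ 2 ∂P
      = ∑ k, ∫ x, ∫ y, r (x, y) ^ 2 ∂κ x ∂P.map (X k) := by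
  have hpair k : Measurable fun ω => (X k ω, Y k ω) := (hX k).prodMk (hY k)
  have hr_memLp k : MemLp r 2 (P.map (X k) ⊗ₘ κ) := by
    rw [← hlaw k]; exact memLp_of_abs_le _ hr hC 2
  refine (integral_sq_sum_of_iIndepFun (hindep.comp (fun _ => r) fun _ => hr)
    (fun k => memLp_of_abs_le P (hr.comp (hpair k)) (fun _ => hC _) 2) fun k => ?_).trans ?_
  · rw [Function.comp_def, integral_comp_of_map_eq_compProd (hpair k).aemeasurable (hlaw k)
      ((hr_memLp k).integrable one_le_two)]
    simp [hr_mean]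
  · exact Finset.sum_congr rfl fun k _ => integral_comp_of_map_eq_compProd
      (f := fun p => r p ^ 2) (hpair k).aemeasurable (hlaw k) (hr_memLp k).integrable_sq

end KernelLaw

section PredictionResidual

variable {α β : Type*} [MeasurableSpace α] [MeasurableSpace β]

noncomputable def predictionResidual (κ : Kernel α β) (f : β → ℝ) (g : α → ℝ) (p : α × β) : ℝ :=
  (∫ y, f y ∂κ p.1 - f p.2) * g p.1

variable {κ : Kernel α β} {f : β → ℝ} {g : α → ℝ} {x : α}

lemma measurable_predictionResidual [IsSFiniteKernel κ] (hf : Measurable f)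
    (hg : Measurable g) : Measurable (predictionResidual κ f g) := by
  have hKf : Measurable fun x => ∫ y, f y ∂κ x :=
    (StronglyMeasurable.integral_kernel_prod_right (f := fun _ y => f y)
      (hf.comp measurable_snd).stronglyMeasurable).measurable
  exact ((hKf.comp measurable_fst).sub (hf.comp measurable_snd)).mul (hg.comp measurable_fst)

lemma abs_predictionResidual_le [IsMarkovKernel κ] {C D : ℝ} (hf : ∀ y, |f y| ≤ C)
    (hg : ∀ x, |g x| ≤ D) (p : α × β) : |predictionResidual κ f g p| ≤ 2 * C * D := by
  have herr : |∫ y, f y ∂κ p.1 - f p.2| ≤ 2 * C := by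
    calc |∫ y, f y ∂κ p.1 - f p.2| ≤ |∫ y, f y ∂κ p.1| + |f p.2| := abs_sub _ _
      _ ≤ 2 * C := by linarith [abs_integral_le_of_abs_le (κ p.1) hf, hf p.2]
  rw [predictionResidual, abs_mul]
  exact mul_le_mul herr (hg p.1) (abs_nonneg _) ((abs_nonneg _).trans herr)

lemma integral_predictionResidual [IsProbabilityMeasure (κ x)] (hf : Integrable f (κ x)) :
    ∫ y, predictionResidual κ f g (x, y) ∂κ x = 0 :=
  integral_integral_sub_mul_const hf (g x)

lemma integral_predictionResidual_sq [IsProbabilityMeasure (κ x)] (hf : MemLp f 2 (κ x)) :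
    ∫ y, predictionResidual κ f g (x, y) ^ 2 ∂κ x
      = g x ^ 2 * (∫ y, f y ^ 2 ∂κ x - (∫ y, f y ∂κ x) ^ 2) :=
  integral_integral_sub_mul_const_sq hf (g x)

end PredictionResidual

theorem integral_sq_sum_predictionResidual_le {Ω α β ι : Type*} [MeasurableSpace Ω]
    [MeasurableSpace α] [MeasurableSpace β] {P : Measure Ω} [IsFiniteMeasure P]
    {κ : Kernel α β} [IsMarkovKernel κ] [Fintype ι] {X : ι → Ω → α} {Y : ι → Ω → β}
    (hX : ∀ k, Measurable (X k)) (hY : ∀ k, Measurable (Y k))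
    (hindep : iIndepFun (fun k ω => (X k ω, Y k ω)) P)
    (hlaw : ∀ k, P.map (fun ω => (X k ω, Y k ω)) = P.map (X k) ⊗ₘ κ)
    {f : β → ℝ} {g : α → ℝ} (hf : Measurable f) (hg : Measurable g) {C D : ℝ}
    (hfC : ∀ y, |f y| ≤ C) (hgD : ∀ x, |g x| ≤ D) {γ : ℝ}
    (hγ : ∀ k, ∫ x, g x ^ 2 * (∫ y, f y ^ 2 ∂κ x - (∫ y, f y ∂κ x) ^ 2) ∂P.map (X k) ≤ γ) :
    ∫ ω, (∑ k, predictionResidual κ f g (X k ω, Y k ω)) ^ 2 ∂P ≤ Fintype.card ι * γ := by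
  have hf_memLp x : MemLp f 2 (κ x) := memLp_of_abs_le _ hf hfC 2
  rw [integral_sq_sum_comp_eq_sum_integral_integral_sq hX hY hindep hlaw
    (measurable_predictionResidual hf hg) (abs_predictionResidual_le hfC hgD)
    fun x => integral_predictionResidual ((hf_memLp x).integrable one_le_two)]
  calc ∑ k, ∫ x, ∫ y, predictionResidual κ f g (x, y) ^ 2 ∂κ x ∂P.map (X k)
      = ∑ k, ∫ x, g x ^ 2 * (∫ y, f y ^ 2 ∂κ x - (∫ y, f y ∂κ x) ^ 2) ∂P.map (X k) := by
        simp only [integral_predictionResidual_sq (hf_memLp _)]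
    _ ≤ ∑ _k : ι, γ := Finset.sum_le_sum fun k _ => hγ k
    _ = Fintype.card ι * γ := by simp

theorem stmt_8_general {M : Type*} [MeasurableSpace M]
    (κ : Kernel M M) [IsMarkovKernel κ] (N : ℕ)
    (ψ : Fin N → M → ℝ)
    (hψ_meas : ∀ i, Measurable (ψ i))
    (hψ_bdd : ∀ i, ∃ C : ℝ, ∀ x, |ψ i x| ≤ C)
    (Kψ Kψ2 : Fin N → M → ℝ)
    (hKψ : ∀ i x, Kψ i x = ∫ y, ψ i y ∂(κ x))
    (hKψ2 : ∀ i x, Kψ2 i x = ∫ y, (ψ i y) ^ 2 ∂(κ x))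
    {Ω : Type*} [MeasurableSpace Ω] (P : Measure Ω) [IsProbabilityMeasure P]
    (T : ℕ) (X Y : Fin T → Ω → M)
    (hX_meas : ∀ k, Measurable (X k)) (hY_meas : ∀ k, Measurable (Y k))
    (hindep : iIndepFun
      (fun k ω => (X k ω, Y k ω)) P)
    (hlaw : ∀ k, Measure.map (fun ω => (X k ω, Y k ω)) P
      = (Measure.map (X k) P) ⊗ₘ κ)
    (γ' : ℝ)
    (hbound : ∀ i j k,
      (∫ x, ψ j x ^ 2 * (Kψ2 i x - (Kψ i x) ^ 2) ∂(Measure.map (X k) P)) ≤ γ')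
    (Khat KT : Ω → Matrix (Fin N) (Fin N) ℝ)
    (hKhat : ∀ ω i j, Khat ω i j = (T : ℝ)⁻¹ * ∑ k, ψ i (Y k ω) * ψ j (X k ω))
    (hKT : ∀ ω i j, KT ω i j = (T : ℝ)⁻¹ * ∑ k, Kψ i (X k ω) * ψ j (X k ω)) :
    (∫ ω, frobeniusNormSq (KT ω - Khat ω) ∂P) ≤ (N : ℝ) ^ 2 * γ' / T := by
  obtain rfl : Kψ = fun i x => ∫ y, ψ i y ∂κ x := funext₂ hKψ
  obtain rfl : Kψ2 = fun i x => ∫ y, ψ i y ^ 2 ∂κ x := funext₂ hKψ2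
  choose C hC using hψ_bdd
  have hentry ω i j : (KT ω - Khat ω) i j
      = (T : ℝ)⁻¹ * ∑ k, predictionResidual κ (ψ i) (ψ j) (X k ω, Y k ω) := by
    simp only [Matrix.sub_apply, hKT, hKhat, predictionResidual, ← mul_sub,
      ← Finset.sum_sub_distrib, sub_mul]
  have hentry_int i j : Integrable (fun ω => (KT ω - Khat ω) i j ^ 2) P := by
    simp only [hentry, mul_pow]
    exact (integrable_sq_sum_comp_of_abs_le (fun k => (hX_meas k).prodMk (hY_meas k))
      (measurable_predictionResidual (hψ_meas i) (hψ_meas j))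
      (abs_predictionResidual_le (hC i) (hC j))).const_mul _
  have hentry_sq i j : ∫ ω, (KT ω - Khat ω) i j ^ 2 ∂P ≤ γ' / T := by
    simp only [hentry, mul_pow, integral_const_mul]
    calc ((T : ℝ)⁻¹) ^ 2 * ∫ ω, (∑ k, predictionResidual κ (ψ i) (ψ j) (X k ω, Y k ω)) ^ 2 ∂P
        ≤ ((T : ℝ)⁻¹) ^ 2 * (T * γ') := by
          gcongr
          simpa using integral_sq_sum_predictionResidual_le hX_meas hY_meas hindep hlaw
            (hψ_meas i) (hψ_meas j) (hC i) (hC j) (hbound i j)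
      _ = γ' / T := by
          rcases eq_or_ne (T : ℝ) 0 with hT_zero | hT_ne
          · simp [hT_zero]
          · field_simp
  calc ∫ ω, frobeniusNormSq (KT ω - Khat ω) ∂P ≤ N * N * (γ' / T) := by
        simpa using integral_frobeniusNormSq_le hentry_int hentry_sq
    _ = (N : ℝ) ^ 2 * γ' / T := by ring

/-- equation 2.18 of the paper, independent-data case. The mean-square
Frobenius distance between the data-driven matrix `K̂_T` and the Koopman stiffness matrix
`K_T` is bounded by `N² γ̃ / T`. -/
theorem stmt_8 {M : Type*} [MeasurableSpace M]
    (κ : Kernel M M) [IsMarkovKernel κ] (N : ℕ)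
    (ψ : Fin N → M → ℝ)
    (hψ_meas : ∀ i, Measurable (ψ i))
    (hψ_bdd : ∀ i, ∃ C : ℝ, ∀ x, |ψ i x| ≤ C)
    (Kψ Kψ2 : Fin N → M → ℝ)
    (hKψ : ∀ i x, Kψ i x = ∫ y, ψ i y ∂(κ x))
    (hKψ2 : ∀ i x, Kψ2 i x = ∫ y, (ψ i y) ^ 2 ∂(κ x))
    {Ω : Type*} [MeasurableSpace Ω] (P : Measure Ω) [IsProbabilityMeasure P]
    (T : ℕ) (hT : 0 < T) (X Y : Fin T → Ω → M)
    (hX_meas : ∀ k, Measurable (X k)) (hY_meas : ∀ k, Measurable (Y k))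
    (hindep : iIndepFun
      (fun k ω => (X k ω, Y k ω)) P)
    (hlaw : ∀ k, Measure.map (fun ω => (X k ω, Y k ω)) P
      = (Measure.map (X k) P) ⊗ₘ κ)
    (γ' : ℝ) (hγ' : 0 ≤ γ')
    (hbound : ∀ i j k,
      (∫ x, ψ j x ^ 2 * (Kψ2 i x - (Kψ i x) ^ 2) ∂(Measure.map (X k) P)) ≤ γ')
    (Khat KT : Ω → Matrix (Fin N) (Fin N) ℝ)
    (hKhat : ∀ ω i j, Khat ω i j = (T : ℝ)⁻¹ * ∑ k, ψ i (Y k ω) * ψ j (X k ω))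
    (hKT : ∀ ω i j, KT ω i j = (T : ℝ)⁻¹ * ∑ k, Kψ i (X k ω) * ψ j (X k ω)) :
    (∫ ω, frobeniusNormSq (KT ω - Khat ω) ∂P) ≤ (N : ℝ) ^ 2 * γ' / T :=
  stmt_8_general κ N ψ hψ_meas hψ_bdd Kψ Kψ2 hKψ hKψ2 P T X Y hX_meas hY_meas hindep hlaw γ' hbound
    Khat KT hKhat hKT
end

section
/- Let μ be a measure on a measurable space M and let ψ_1,…,ψ_N : M → ℝ be measurable, μ-square-integrable functions whose mass matrix M̄ is invertible. Let G be a real N×N matrix, let t ≥ 0, and suppose φ_1,…,φ_N : M → ℝ are measurable μ-square-integrable functions satisfying φ_i = Σ_{j=1}^N (exp(t • G))_{ij} ψ_j μ-almost everywhere for each i. Define the N×N matrices T̄ by T̄_{ij} = ∫ φ_i ψ_j dμ and L̄ by L̄_{ij} = ∫ (Σ_{k=1}^N G_{ik} ψ_k) ψ_j dμ. Then T̄ M̄⁻¹ = exp(t • (L̄ M̄⁻¹)). -/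
/-!
Because `φ_i = Σ_j (exp(tG))_{ij} ψ_j` and the generator image of `ψ_i` is `Σ_k G_{ik} ψ_k`,
bilinearity of `(f, g) ↦ ∫ f g dμ` gives `T̄ = exp(tG) M̄` and `L̄ = G M̄`. Multiplying on the right
by `M̄⁻¹` yields `T̄ M̄⁻¹ = exp(tG) = exp(t L̄ M̄⁻¹)`.
-/

open MeasureTheory Matrix

noncomputable def massMatrix {M ι : Type*} [MeasurableSpace M] (μ : Measure M)
    (ψ : ι → M → ℝ) : Matrix ι ι ℝ :=
  Matrix.of fun i j => ∫ x, ψ i x * ψ j x ∂μ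

theorem integral_linearCombination_mul_eq_mul_massMatrix {M ι κ : Type*} [MeasurableSpace M]
    {μ : Measure M} [Fintype ι] {ψ : ι → M → ℝ} (hψ : ∀ i, MemLp (ψ i) 2 μ)
    (A : Matrix κ ι ℝ) (i : κ) (j : ι) :
    ∫ x, (∑ k, A i k * ψ k x) * ψ j x ∂μ = (A * massMatrix μ ψ) i j := by
  have hsum : (fun x => (∑ k, A i k * ψ k x) * ψ j x)
      = fun x => ∑ k, A i k * (ψ k x * ψ j x) := by
    ext x
    simp only [Finset.sum_mul, mul_assoc]
  rw [hsum, integral_finsetSum]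
  · simp only [integral_const_mul, mul_apply, massMatrix, of_apply]
  · exact fun k _ => ((hψ k).integrable_mul (hψ j)).const_mul (A i k)

theorem stmt_11_general {M : Type*} [MeasurableSpace M] (μ : Measure M) (N : ℕ)
    (ψ : Fin N → M → ℝ)
    (hψ_L2 : ∀ i, MemLp (ψ i) 2 μ)
    (Mbar : Matrix (Fin N) (Fin N) ℝ)
    (hMbar : ∀ i j, Mbar i j = ∫ x, ψ i x * ψ j x ∂μ)
    (hMbar_inv : IsUnit Mbar)
    (G : Matrix (Fin N) (Fin N) ℝ) (t : ℝ)
    (φ : Fin N → M → ℝ)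
    (hφ : ∀ i, φ i =ᵐ[μ] fun x => ∑ j, (NormedSpace.exp (t • G)) i j * ψ j x)
    (Tbar Lbar : Matrix (Fin N) (Fin N) ℝ)
    (hTbar : ∀ i j, Tbar i j = ∫ x, φ i x * ψ j x ∂μ)
    (hLbar : ∀ i j, Lbar i j = ∫ x, (∑ k, G i k * ψ k x) * ψ j x ∂μ) :
    Tbar * Mbar⁻¹ = NormedSpace.exp (t • (Lbar * Mbar⁻¹)) := by
  have hM : Mbar = massMatrix μ ψ := Matrix.ext hMbar
  have hT : Tbar = NormedSpace.exp (t • G) * Mbar := by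
    ext i j
    rw [hTbar, hM, ← integral_linearCombination_mul_eq_mul_massMatrix hψ_L2]
    exact integral_congr_ae ((hφ i).mul .rfl)
  have hL : Lbar = G * Mbar := by
    ext i j
    rw [hLbar, hM, integral_linearCombination_mul_eq_mul_massMatrix hψ_L2]
  have hdet : IsUnit Mbar.det := (isUnit_iff_isUnit_det Mbar).mp hMbar_inv
  rw [hT, hL, mul_nonsing_inv_cancel_right _ _ hdet, mul_nonsing_inv_cancel_right _ _ hdet]

/-- equation 2.30 of Theorem 2.13. If the time-`t` Koopman images
`φ_i` of the basis functions satisfy `φ_i = Σ_j (exp(t G))_{ij} ψ_j` μ-a.e., then the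
projected Koopman matrix `T̄ M̄⁻¹` equals `exp(t (L̄ M̄⁻¹))`, where `L̄` is the generator
stiffness matrix. -/
theorem stmt_11 {M : Type*} [MeasurableSpace M] (μ : Measure M) (N : ℕ)
    (ψ : Fin N → M → ℝ)
    (hψ_meas : ∀ i, Measurable (ψ i))
    (hψ_L2 : ∀ i, MemLp (ψ i) 2 μ)
    (Mbar : Matrix (Fin N) (Fin N) ℝ)
    (hMbar : ∀ i j, Mbar i j = ∫ x, ψ i x * ψ j x ∂μ)
    (hMbar_inv : IsUnit Mbar)
    (G : Matrix (Fin N) (Fin N) ℝ) (t : ℝ) (ht : 0 ≤ t)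
    (φ : Fin N → M → ℝ)
    (hφ_meas : ∀ i, Measurable (φ i))
    (hφ_L2 : ∀ i, MemLp (φ i) 2 μ)
    (hφ : ∀ i, φ i =ᵐ[μ] fun x => ∑ j, (NormedSpace.exp (t • G)) i j * ψ j x)
    (Tbar Lbar : Matrix (Fin N) (Fin N) ℝ)
    (hTbar : ∀ i j, Tbar i j = ∫ x, φ i x * ψ j x ∂μ)
    (hLbar : ∀ i j, Lbar i j = ∫ x, (∑ k, G i k * ψ k x) * ψ j x ∂μ) :
    Tbar * Mbar⁻¹ = NormedSpace.exp (t • (Lbar * Mbar⁻¹)) :=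
  stmt_11_general μ N ψ hψ_L2 Mbar hMbar hMbar_inv G t φ hφ Tbar Lbar hTbar hLbar
end
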